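/- For every integer n ≥ 3, the integer m_n (defined in the context, equal to m_{2r+1} when n = 2r+1 is odd and to m_{2r} when n = 2r is even) satisfies m_n > 2^{2^n}. -/

import Mathlib

/-! With `L_{k+1} = L_k ++ [r+k+1, r-k]`, `Y = b_{r-k}` and `X = b_{r+k+1} = 1 + (Y-1)² B_{L_k}`,
the numbers `B_{L_{k+1}}`, `∏ b(L_{k+1})` and `B` of the reversed list equal
`∏ b(L_k)·X·(Y-1) + B_{L_k}`, `∏ b(L_k)·X·Y` and `Y(X·B_{rev L_k} - 1) + 1`, so a common lower
bound `u ≥ 1` of the three at stage `k` becomes `u²(Y-1)³` at stage `k+1`. Sylvester's numbers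
satisfy `2(s_{j+2} - 1) ≥ 3·2^{2^{j+1}}`, hence `(s_j - 1)³ ≥ 2^{3·2^{j-1} + 1}` for `j ≥ 2`.
Solving the recursion for the exponents gives `m_{2r} ≥ 2^{4^r + 2^r - 3}` and
`m_{2r+1} ≥ 2^{2(4^r + 2^r - 3)}`, which beat `2^{2^n}` once `r ≥ 2`; the last case is
`m_3 = 311`. -/

/-- The alternating symbol `B_{i_1,…,i_k} = b_{i_1}⋯b_{i_k} − b_{i_1}⋯b_{i_{k−1}} + ⋯
+ (−1)^{k−1} b_{i_1} + (−1)^k`, with `B` of the empty list equal to `1`. -/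
def altB (b : ℕ → ℤ) (L : List ℕ) : ℤ :=
  ∑ t ∈ Finset.range (L.length + 1), (-1) ^ (L.length - t) * ((L.take t).map b).prod

/-- The list `L_j = (r+1, r, r+2, r−1, …, r+j, r+1−j)`, the concatenation of the pairs
`(r+t, r+1−t)` for `t = 1, …, j`. -/
def loopList (r j : ℕ) : List ℕ :=
  (List.range j).flatMap fun t => [r + t + 1, r - t]

section AltB

variable (b : ℕ → ℤ)

@[simp]
lemma altB_nil : altB b [] = 1 := by simp [altB]

lemma altB_cons (i : ℕ) (L : List ℕ) :
    altB b (i :: L) = b i * altB b L + (-1) ^ (L.length + 1) := by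
  rw [altB, altB, List.length_cons, Finset.sum_range_succ', Finset.mul_sum]
  simp only [List.take_succ_cons, List.map_cons, List.prod_cons, List.take_zero, List.map_nil,
    List.prod_nil, mul_one, Nat.add_sub_add_right, Nat.sub_zero]
  congr 1
  exact Finset.sum_congr rfl fun _ _ => by ring

lemma altB_append_singleton (L : List ℕ) (i : ℕ) :
    altB b (L ++ [i]) = (L.map b).prod * b i - altB b L := by
  rw [altB, altB, List.length_append, List.length_singleton, Finset.sum_range_succ,
    List.take_of_length_le (by simp), Nat.sub_self, pow_zero, one_mul, sub_eq_add_neg,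
    ← Finset.sum_neg_distrib, add_comm]
  simp only [List.map_append, List.map_singleton, List.prod_append, List.prod_singleton]
  congr 1
  refine Finset.sum_congr rfl fun t ht => ?_
  have ht : t ≤ L.length := Finset.mem_range_succ_iff.mp ht
  rw [List.take_append_of_le_length ht, Nat.sub_add_comm ht, pow_succ]
  ring

lemma altB_append_pair (L : List ℕ) (x y : ℕ) :
    altB b (L ++ [x, y]) = (L.map b).prod * b x * (b y - 1) + altB b L := by
  rw [show L ++ [x, y] = L ++ [x] ++ [y] by simp, altB_append_singleton, altB_append_singleton]
  simp only [List.map_append, List.map_singleton, List.prod_append, List.prod_singleton]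
  ring

lemma altB_cons_cons_of_even {L : List ℕ} (hL : Even L.length) (x y : ℕ) :
    altB b (y :: x :: L) = b y * (b x * altB b L - 1) + 1 := by
  rw [altB_cons, altB_cons, List.length_cons, (hL.add_one).neg_one_pow,
    (hL.add_one.add_one).neg_one_pow]
  ring

end AltB

section LoopList

@[simp]
lemma loopList_zero (r : ℕ) : loopList r 0 = [] := rfl

lemma loopList_succ (r k : ℕ) : loopList r (k + 1) = loopList r k ++ [r + (k + 1), r - k] := by
  simp [loopList, List.range_succ, List.flatMap_append, add_assoc]

lemma length_loopList (r k : ℕ) : (loopList r k).length = 2 * k := by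
  induction k with
  | zero => rfl
  | succ k ih => simp [loopList_succ, ih, Nat.mul_succ]

lemma reverse_loopList_succ (r k : ℕ) :
    (loopList r (k + 1)).reverse = (r - k) :: (r + (k + 1)) :: (loopList r k).reverse := by
  simp [loopList_succ]

end LoopList

lemma loop_step_bounds {R : Type*} [CommRing R] [LinearOrder R] [IsStrictOrderedRing R]
    {u A P C X Y : R} (hu : 1 ≤ u) (hA : u ≤ A) (hP : u ≤ P) (hC : u ≤ C) (hY : 1 ≤ Y)
    (hX : X = 1 + (Y - 1) ^ 2 * A) :
    u ^ 2 * (Y - 1) ^ 3 ≤ P * X * (Y - 1) + A ∧ u ^ 2 * (Y - 1) ^ 3 ≤ P * X * Y ∧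
      u ^ 2 * (Y - 1) ^ 3 ≤ Y * (X * C - 1) + 1 := by
  have hw : 0 ≤ Y - 1 := sub_nonneg.mpr hY
  have hXu : (Y - 1) ^ 2 * u ≤ X := by nlinarith [sq_nonneg (Y - 1)]
  have hPX : u * ((Y - 1) ^ 2 * u) ≤ P * X :=
    mul_le_mul hP hXu (by positivity) (by linarith)
  have hXC : (1 + (Y - 1) ^ 2 * u) * u ≤ X * C :=
    mul_le_mul (by nlinarith [sq_nonneg (Y - 1)]) hC (by linarith)
      (by nlinarith [sq_nonneg (Y - 1)])
  refine ⟨?_, ?_, ?_⟩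
  · nlinarith [mul_le_mul_of_nonneg_right hPX hw]
  · nlinarith [mul_le_mul_of_nonneg_right hPX hw]
  · have hXC' : (Y - 1) ^ 2 * u ^ 2 ≤ X * C - 1 := by nlinarith
    nlinarith [mul_le_mul (sub_le_self Y zero_le_one) hXC' (by positivity) (by linarith)]

def cubeExp : ℕ → ℕ
  | 0 => 0
  | 1 => 3
  | j + 2 => 3 * 2 ^ (j + 1) + 1

section Sylvester

variable {s : ℕ → ℤ}

lemma sylvester_succ_succ_sub_one
    (hsrec : ∀ m, s (m + 1) = (∏ i ∈ Finset.range (m + 1), s i) + 1) (m : ℕ) :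
    s (m + 2) - 1 = s (m + 1) * (s (m + 1) - 1) := by
  rw [hsrec (m + 1), Finset.prod_range_succ, hsrec m]
  ring

variable (hs0 : s 0 = 2) (hsrec : ∀ m, s (m + 1) = (∏ i ∈ Finset.range (m + 1), s i) + 1)
include hs0 hsrec

lemma sylvester_one : s 1 = 3 := by
  simp [hsrec 0, hs0]

lemma sylvester_two : s 2 = 7 := by
  have h := sylvester_succ_succ_sub_one hsrec 0
  rw [sylvester_one hs0 hsrec] at h
  linarith

lemma three_mul_two_pow_two_pow_le_sylvester (j : ℕ) :
    3 * 2 ^ 2 ^ (j + 1) ≤ 2 * (s (j + 2) - 1) := by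
  induction j with
  | zero => simp [sylvester_two hs0 hsrec]
  | succ j ih =>
    have hstep := sylvester_succ_succ_sub_one hsrec (j + 1)
    have hpos : (0 : ℤ) ≤ 2 ^ 2 ^ (j + 1) := by positivity
    rw [pow_succ 2 (j + 1), pow_mul, hstep]
    nlinarith

lemma two_pow_cubeExp_le_sylvester : ∀ j, (2 : ℤ) ^ cubeExp j ≤ (s j - 1) ^ 3
  | 0 => by simp [cubeExp, hs0]
  | 1 => by simp [cubeExp, sylvester_one hs0 hsrec]
  | j + 2 => by
    have h := three_mul_two_pow_two_pow_le_sylvester hs0 hsrec j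
    have hpos : (0 : ℤ) ≤ 2 ^ 2 ^ (j + 1) := by positivity
    have hcube : (3 * 2 ^ 2 ^ (j + 1)) ^ 3 ≤ (2 * (s (j + 2) - 1)) ^ 3 :=
      pow_le_pow_left₀ (by positivity) h 3
    rw [cubeExp, pow_succ, pow_mul']
    nlinarith [pow_nonneg hpos 3]

end Sylvester

def loopExp (r : ℕ) : ℕ → ℕ
  | 0 => 0
  | k + 1 => 2 * loopExp r k + cubeExp (r - k)

lemma loopExp_add_two_pow {r k : ℕ} (hk : k < r) :
    loopExp r k + 2 ^ (r - k) + 1 = 2 ^ (r + k) + 2 ^ k := by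
  induction k with
  | zero => simp [loopExp]
  | succ k ih =>
    obtain ⟨j, hj⟩ : ∃ j, r - k = j + 2 := ⟨r - k - 2, by omega⟩
    have hj' : r - (k + 1) = j + 1 := by omega
    have ih := ih (by omega)
    rw [hj] at ih
    rw [loopExp, hj, hj', cubeExp, show r + (k + 1) = r + k + 1 by ring, pow_succ, pow_succ 2 k]
    rw [pow_succ 2 (j + 1)] at ih
    omega

lemma loopExp_self {r : ℕ} (hr : 1 ≤ r) : loopExp r r + 3 = 4 ^ r + 2 ^ r := by
  obtain ⟨k, rfl⟩ : ∃ k, r = k + 1 := ⟨r - 1, by omega⟩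
  have h := loopExp_add_two_pow (show k < k + 1 by omega)
  rw [Nat.add_sub_cancel_left, show k + 1 + k = 2 * k + 1 by ring] at h
  have h4 : 4 ^ (k + 1) = 2 ^ (2 * k + 1) * 2 := by rw [pow_succ, pow_succ, pow_mul]; ring
  rw [loopExp, Nat.add_sub_cancel_left, cubeExp, h4, pow_succ 2 k]
  omega

lemma four_pow_lt_loopExp_self {r : ℕ} (hr : 2 ≤ r) : 4 ^ r < loopExp r r := by
  have h4 : 2 ^ 2 ≤ 2 ^ r := Nat.pow_le_pow_right (by norm_num) hr
  have := loopExp_self (by omega : 1 ≤ r)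
  omega

lemma loopExp_succ_self (r : ℕ) : loopExp r (r + 1) = 2 * loopExp r r := by
  simp [loopExp, cubeExp]

lemma two_pow_loopExp_le {r K : ℕ} {b : ℕ → ℤ}
    (hb : ∀ j ≤ r, (2 : ℤ) ^ cubeExp j ≤ (b j - 1) ^ 3)
    (hrec : ∀ i, 1 ≤ i → i ≤ K →
      b (r + i) = 1 + (b (r + 1 - i) - 1) ^ 2 * altB b (loopList r (i - 1))) :
    ∀ k ≤ K, (2 : ℤ) ^ loopExp r k ≤ altB b (loopList r k) ∧
      (2 : ℤ) ^ loopExp r k ≤ ((loopList r k).map b).prod ∧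
      (2 : ℤ) ^ loopExp r k ≤ altB b (loopList r k).reverse := by
  intro k hk
  induction k with
  | zero => simp [loopExp]
  | succ k ih =>
    obtain ⟨hA, hP, hC⟩ := ih (by omega)
    have hcube := hb (r - k) (Nat.sub_le r k)
    have hY : 1 ≤ b (r - k) := by
      have := (Odd.pow_nonneg_iff (by decide : Odd 3)).mp (le_trans (by positivity) hcube)
      linarith
    have hX : b (r + (k + 1)) = 1 + (b (r - k) - 1) ^ 2 * altB b (loopList r k) := by
      simpa using hrec (k + 1) (by omega) hk
    have hpow : (2 : ℤ) ^ loopExp r (k + 1) ≤ (2 ^ loopExp r k) ^ 2 * (b (r - k) - 1) ^ 3 := by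
      rw [loopExp, pow_add, pow_mul']
      exact mul_le_mul_of_nonneg_left hcube (by positivity)
    obtain ⟨hA', hP', hC'⟩ := loop_step_bounds (one_le_pow₀ one_le_two) hA hP hC hY hX
    have heven : Even (loopList r k).reverse.length := by
      rw [List.length_reverse, length_loopList]; exact even_two_mul k
    refine ⟨?_, ?_, ?_⟩
    · rw [loopList_succ, altB_append_pair]; exact hpow.trans hA'
    · rw [loopList_succ]
      simp only [List.map_append, List.map_cons, List.map_nil, List.prod_append, List.prod_cons,
        List.prod_nil, mul_one, ← mul_assoc]
      exact hpow.trans hP'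
    · rw [reverse_loopList_succ, altB_cons_cons_of_even b heven]; exact hpow.trans hC'

lemma altB_reverse_loopList_one_two {b : ℕ → ℤ} (h0 : b 0 = 2) (h1 : b 1 = 3)
    (hrec : ∀ i, 1 ≤ i → i ≤ 2 →
      b (1 + i) = 1 + (b (1 + 1 - i) - 1) ^ 2 * altB b (loopList 1 (i - 1))) :
    altB b (loopList 1 2).reverse = 311 := by
  have h2 : b 2 = 5 := by simpa [h1] using hrec 1 le_rfl one_le_two
  have h3 : b 3 = 12 := by
    have h := hrec 2 one_le_two le_rfl
    rw [show loopList 1 (2 - 1) = [2, 1] from rfl] at h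
    simpa [h0, h1, h2, altB_cons] using h
  rw [show (loopList 1 2).reverse = [0, 3, 1, 2] from rfl]
  simp [altB_cons, h0, h1, h2, h3]

/-- For every `n ≥ 3`, the group order `m_n` of the paper's klt Calabi–Yau variety
example of dimension `n` (equal to `m_{2r+1} = B_{(0,2r+1,1,2r,…,r,r+1)}` when
`n = 2r+1` is odd, and to `m_{2r} = B_{(1,2r,2,2r−1,…,r,r+1)}` when `n = 2r` is even)
satisfies `m_n > 2^(2^n)`; i.e. the minimal log discrepancy `1/m_n` is smaller than
`1/2^(2^n)`. -/
theorem group_order_doubly_exponential (n : ℕ) (hn : 3 ≤ n)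
    (s : ℕ → ℤ) (hs0 : s 0 = 2)
    (hsrec : ∀ m, s (m + 1) = (∏ i ∈ Finset.range (m + 1), s i) + 1) :
    ∀ r : ℕ, ∀ b : ℕ → ℤ, (∀ i ≤ r, b i = s i) →
      ((n = 2 * r + 1 →
        (∀ i, 1 ≤ i → i ≤ r + 1 →
          b (r + i) = 1 + (b (r + 1 - i) - 1) ^ 2 * altB b (loopList r (i - 1))) →
        (2 : ℤ) ^ (2 ^ n) < altB b (loopList r (r + 1)).reverse) ∧
      (n = 2 * r →
        (∀ i, 1 ≤ i → i ≤ r →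
          b (r + i) = 1 + (b (r + 1 - i) - 1) ^ 2 * altB b (loopList r (i - 1))) →
        (2 : ℤ) ^ (2 ^ n) < altB b (loopList r r).reverse)) := by
  intro r b hbs
  have hb : ∀ j ≤ r, (2 : ℤ) ^ cubeExp j ≤ (b j - 1) ^ 3 := fun j hj => by
    rw [hbs j hj]; exact two_pow_cubeExp_le_sylvester hs0 hsrec j
  refine ⟨fun hodd hrec => ?_, fun heven hrec => ?_⟩
  · obtain rfl | hr : r = 1 ∨ 2 ≤ r := by omega
    · rw [altB_reverse_loopList_one_two (by rw [hbs 0 (by omega), hs0])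
        (by rw [hbs 1 le_rfl, sylvester_one hs0 hsrec]) hrec, hodd]
      norm_num
    · refine lt_of_lt_of_le (pow_lt_pow_right₀ one_lt_two ?_)
        (two_pow_loopExp_le hb hrec _ le_rfl).2.2
      rw [hodd, loopExp_succ_self, pow_succ, pow_mul]
      norm_num
      linarith [four_pow_lt_loopExp_self hr]
  · refine lt_of_lt_of_le (pow_lt_pow_right₀ one_lt_two ?_)
      (two_pow_loopExp_le hb hrec _ le_rfl).2.2
    rw [heven, pow_mul]
    exact four_pow_lt_loopExp_self (by omega)
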